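/- Fix an integer K ≥ 1, a real α > 0, and c : Fin K → ℝ. If p is a probability vector with F_c(p) = F_c(σ_α(c)), then p = σ_α(c); that is, the softmax distribution is the unique maximizer of the entropy-regularized objective over the probability simplex. -/

import Mathlib

open Real Finset

/-- The softmax vector: `σ_α(c) i = exp(c i / α) / ∑ j, exp(c j / α)`. -/
noncomputable def softmax (K : ℕ) (α : ℝ) (c : Fin K → ℝ) : Fin K → ℝ :=
  fun i => Real.exp (c i / α) / ∑ j, Real.exp (c j / α)

/-- The entropy-regularized objective
`F_c(p) = ∑ i, p i * c i − α * ∑ i, p i * log (p i)`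
(note `Real.log 0 = 0`, so the convention `0 * log 0 = 0` holds). -/
noncomputable def entObj (K : ℕ) (α : ℝ) (c p : Fin K → ℝ) : ℝ :=
  ∑ i, p i * c i - α * ∑ i, p i * Real.log (p i)

/-- Gibbs-type pointwise inequality. -/
lemma gibbs_term (p s : ℝ) (hp : 0 ≤ p) (hs : 0 < s) :
    p * Real.log s - p * Real.log p ≤ s - p := by
  rcases eq_or_lt_of_le hp with h | h
  · simp [← h]; positivity
  · have h1 : Real.log (s / p) ≤ s / p - 1 := Real.log_le_sub_one_of_pos (by positivity)
    have h2 : Real.log (s / p) = Real.log s - Real.log p := Real.log_div hs.ne' h.ne'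
    nlinarith [mul_le_mul_of_nonneg_left h1 hp, mul_div_cancel₀ s h.ne']

lemma gibbs_term_strict (p s : ℝ) (hp : 0 ≤ p) (hs : 0 < s) (hne : p ≠ s) :
    p * Real.log s - p * Real.log p < s - p := by
  rcases eq_or_lt_of_le hp with h | h
  · simp [← h]; exact hs
  · have hr : s / p ≠ 1 := by
      intro hc
      exact hne (by field_simp at hc; linarith)
    have h1 : Real.log (s / p) < s / p - 1 := Real.log_lt_sub_one_of_pos (by positivity) hr
    have h2 : Real.log (s / p) = Real.log s - Real.log p := Real.log_div hs.ne' h.ne'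
    nlinarith [mul_lt_mul_of_pos_left h1 h, mul_div_cancel₀ s h.ne']

theorem softmax_unique_maximizer (K : ℕ) (hK : 1 ≤ K) (α : ℝ) (hα : 0 < α)
    (c : Fin K → ℝ) (p : Fin K → ℝ) (hp0 : ∀ i, 0 ≤ p i) (hp1 : ∑ i, p i = 1)
    (heq : entObj K α c p = entObj K α c (softmax K α c)) :
    p = softmax K α c := by
  set Z : ℝ := ∑ j, Real.exp (c j / α) with hZ
  have hZpos : 0 < Z := Finset.sum_pos (fun j _ => Real.exp_pos _)
    (Finset.univ_nonempty_iff.mpr ⟨⟨0, hK⟩⟩)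
  set σ : Fin K → ℝ := softmax K α c with hσ
  have hσpos : ∀ i, 0 < σ i := fun i => div_pos (Real.exp_pos _) hZpos
  have hσsum : ∑ i, σ i = 1 := by
    simp only [hσ, softmax, ← Finset.sum_div, ← hZ]
    exact div_self hZpos.ne'
  have hlogσ : ∀ i, Real.log (σ i) = c i / α - Real.log Z := by
    intro i
    show Real.log (Real.exp (c i / α) / Z) = _
    rw [Real.log_div (Real.exp_pos _).ne' hZpos.ne', Real.log_exp]
  have hc : ∀ i, c i = α * (Real.log (σ i) + Real.log Z) := by
    intro i
    rw [hlogσ i]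
    field_simp
    ring
  -- value of entObj for any probability vector q
  have key : ∀ q : Fin K → ℝ, (∑ i, q i = 1) →
      entObj K α c q = α * Real.log Z - α * ∑ i, (q i * Real.log (q i) - q i * Real.log (σ i)) := by
    intro q hq
    unfold entObj
    have : ∑ i, q i * c i = α * (∑ i, q i * Real.log (σ i)) + α * Real.log Z := by
      have : ∀ i, q i * c i = α * (q i * Real.log (σ i)) + α * Real.log Z * q i := by
        intro i; rw [hc i]; ring
      rw [Finset.sum_congr rfl (fun i _ => this i), Finset.sum_add_distrib, ← Finset.mul_sum,
        ← Finset.mul_sum, hq, mul_one]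
    rw [this, Finset.sum_sub_distrib]
    ring
  have hFσ : entObj K α c σ = α * Real.log Z := by
    rw [key σ hσsum]; simp
  have hD : ∑ i, (p i * Real.log (p i) - p i * Real.log (σ i)) = 0 := by
    have h := heq
    rw [key p hp1, hFσ] at h
    have h2 : α * ∑ i, (p i * Real.log (p i) - p i * Real.log (σ i)) = 0 := by linarith
    exact (mul_eq_zero.mp h2).resolve_left hα.ne'
  by_contra hne
  have hex : ∃ i, p i ≠ σ i := by
    by_contra h
    push_neg at h
    exact hne (funext h)
  obtain ⟨i0, hi0⟩ := hex
  have hlt : ∑ i, (p i * Real.log (σ i) - p i * Real.log (p i)) < ∑ i, (σ i - p i) :=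
    Finset.sum_lt_sum (fun i _ => gibbs_term (p i) (σ i) (hp0 i) (hσpos i))
      ⟨i0, Finset.mem_univ i0, gibbs_term_strict (p i0) (σ i0) (hp0 i0) (hσpos i0) hi0⟩
  have h1 : ∑ i, (σ i - p i) = 0 := by rw [Finset.sum_sub_distrib, hσsum, hp1]; ring
  have h2 : ∑ i, (p i * Real.log (σ i) - p i * Real.log (p i))
      = -∑ i, (p i * Real.log (p i) - p i * Real.log (σ i)) := by
    rw [← Finset.sum_neg_distrib]; congr 1; funext i; ring
  rw [h1, h2, hD] at hlt
  simp at hlt
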